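/- arXiv:2309.02927 — 3 statements merged into one kernel-verified Lean document; each statement's English description precedes it below -/
import Mathlib

section
/- Let $F \ge 0$ (playing the role of the wetting free energy $\textsc{f}(\lambda)$), let $\mathrm{I}: [0,\infty) \to [0,\infty]$ be the Legendre transform $\mathrm{I}(x) = \sup_{t\ge0}\{tx - \Lambda(t)\}$ of a convex function $\Lambda$ with $\Lambda(0)=0$, $\Lambda'(0)=0$, differentiable and strictly convex on $[0,t_0)$ with $t_0 = \sup\{t:\Lambda(t)<\infty\}>0$, and fix $a>0$. Define $g(w) = wF + w\,\mathrm{I}(a/w)$ for $w>0$ and $g(0) = \lim_{w\downarrow 0} w \mathrm{I}(a/w)$. Then $\inf_{w\ge0} g(w) = a\,\Lambda^{-1}(F)$, where $\Lambda^{-1}$ denotes the left-continuous generalized inverse of $\Lambda$ (so $\Lambda^{-1}(F)=t_0$ if $F \ge \Lambda(t_0)$). -/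
/-! Write `D = {t ≥ 0 : t < t0}`, so that `w I(a/w) = sup_{t ∈ D} (t a - w Λ t)⁺` for `w > 0`.
Each `t ∈ D` with `Λ t ≤ F` gives `g(w) ≥ w F + (t a - w Λ t) ≥ a t`, and letting `w ↓ 0` also
`g(0) ≥ a t`. Conversely, `Λ'(0) = 0` makes the convex `Λ` nondecreasing and nonnegative on `D`.
If `Λ⁻¹(F) = t0` this gives `g(0) ≤ a t0`. Otherwise, for `Λ⁻¹(F) < x < y < t0` the secant slope
`m` of `Λ` over `[x, y]` satisfies `m t - Λ t ≤ m y - Λ x < m y - F` on `D`, so `g(a/m) ≤ a y`,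
and `y ↓ Λ⁻¹(F)` gives the bound `a Λ⁻¹(F)`. -/

open Filter Topology Set
open scoped ENNReal

theorem ConvexOn.monotoneOn_of_hasDerivWithinAt_Ioi {f : ℝ → ℝ} {s : Set ℝ} {x₀ f' : ℝ}
    (hf : ConvexOn ℝ s f) (hx₀ : x₀ ∈ s) (hs : s ⊆ Ici x₀)
    (hf' : HasDerivWithinAt f f' (Ioi x₀) x₀) (hf'0 : 0 ≤ f') : MonotoneOn f s := by
  intro x hx y hy hxy
  obtain rfl | hxy := hxy.eq_or_lt
  · rfl
  refine (slope_nonneg_iff_of_le hxy.le).mp ?_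
  obtain rfl | hx₀x := (mem_Ici.mp (hs hx)).eq_or_lt
  · exact hf'0.trans (hf.le_slope_of_hasDerivWithinAt_Ioi hx hy hxy hf')
  calc 0 ≤ slope f x₀ x := hf'0.trans (hf.le_slope_of_hasDerivWithinAt_Ioi hx₀ hx hx₀x hf')
    _ ≤ slope f x y := by
      simpa only [slope_def_field] using hf.slope_mono_adjacent hx₀ hy hx₀x hxy

theorem ConvexOn.slope_mul_sub_le {f : ℝ → ℝ} {s : Set ℝ} {x y t : ℝ}
    (hf : ConvexOn ℝ s f) (hmono : MonotoneOn f s) (hx : x ∈ s) (hy : y ∈ s) (hxy : x < y)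
    (ht : t ∈ s) : slope f x y * t - f t ≤ slope f x y * y - f x := by
  have hm : 0 ≤ slope f x y := hmono.slope_nonneg hx hy
  rw [slope_def_field] at hm ⊢
  rcases lt_or_ge t x with htx | hxt
  · have h := hf.slope_mono_adjacent ht hy htx hxy
    rw [div_le_iff₀ (sub_pos.mpr htx)] at h
    nlinarith
  rcases le_or_gt t y with hty | hyt
  · nlinarith [hmono hx ht hxt]
  · have h := hf.slope_mono_adjacent hx ht hxy hyt
    rw [le_div_iff₀ (sub_pos.mpr hyt)] at h
    nlinarith [hmono hx hy hxy.le]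

theorem ENNReal.ofReal_mul_iSup_ofReal_sub {f : ℝ → ℝ} {s : Set ℝ} {a w : ℝ} (hw : 0 < w) :
    ENNReal.ofReal w * ⨆ t ∈ s, ENNReal.ofReal (t * (a / w) - f t)
      = ⨆ t ∈ s, ENNReal.ofReal (t * a - w * f t) := by
  simp_rw [ENNReal.mul_iSup, ← ENNReal.ofReal_mul hw.le]
  refine iSup_congr fun t => iSup_congr fun _ => ?_
  field_simp

theorem ENNReal.ofReal_mul_ofReal_le_add_iSup {f : ℝ → ℝ} {s : Set ℝ} {a w F t : ℝ}
    (ha : 0 ≤ a) (hw : 0 ≤ w) (ht : t ∈ s) (htF : f t ≤ F) :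
    ENNReal.ofReal a * ENNReal.ofReal t
      ≤ ENNReal.ofReal (w * F) + ⨆ u ∈ s, ENNReal.ofReal (u * a - w * f u) :=
  calc ENNReal.ofReal a * ENNReal.ofReal t = ENNReal.ofReal (t * a) := by
        rw [← ENNReal.ofReal_mul ha, mul_comm]
    _ ≤ ENNReal.ofReal (w * F + (t * a - w * f t)) :=
        ENNReal.ofReal_le_ofReal (by nlinarith [mul_le_mul_of_nonneg_left htF hw])
    _ ≤ ENNReal.ofReal (w * F) + ENNReal.ofReal (t * a - w * f t) := ENNReal.ofReal_add_le
    _ ≤ _ := add_le_add_right (le_iSup₂ (f := fun u _ => ENNReal.ofReal (u * a - w * f u)) t ht) _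

theorem ENNReal.iSup_ofReal_sub_le_ofReal_mul {f : ℝ → ℝ} {s : Set ℝ} {a w : ℝ} {T : ℝ≥0∞}
    (ha : 0 ≤ a) (hw : 0 ≤ w) (hf : ∀ t ∈ s, 0 ≤ f t) (hT : ∀ t ∈ s, ENNReal.ofReal t ≤ T) :
    ⨆ t ∈ s, ENNReal.ofReal (t * a - w * f t) ≤ ENNReal.ofReal a * T :=
  iSup₂_le fun t ht => calc
    ENNReal.ofReal (t * a - w * f t) ≤ ENNReal.ofReal (a * t) :=
        ENNReal.ofReal_le_ofReal (by nlinarith [mul_nonneg hw (hf t ht)])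
    _ = ENNReal.ofReal a * ENNReal.ofReal t := ENNReal.ofReal_mul ha
    _ ≤ ENNReal.ofReal a * T := mul_le_mul_right (hT t ht) _

theorem le_inf_iInf_of_tendsto_nhdsGT {G : ℝ → ℝ≥0∞} {x₀ : ℝ} {g₀ c : ℝ≥0∞}
    (hG : Tendsto G (𝓝[>] x₀) (𝓝 g₀)) (hc : ∀ w > x₀, c ≤ G w) :
    c ≤ g₀ ⊓ ⨅ w > x₀, G w :=
  le_inf (ge_of_tendsto hG (eventually_nhdsWithin_of_forall hc)) (le_iInf₂ hc)

theorem ENNReal.le_mul_of_forall_lt_ofReal {S T G c : ℝ≥0∞} (hc : c ≠ ⊤) (hST : S < T)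
    (h : ∀ x y : ℝ, S < ENNReal.ofReal x → x < y → ENNReal.ofReal y < T →
      G ≤ c * ENNReal.ofReal y) :
    G ≤ c * S := by
  have hb : ∀ b ∈ Ioo S T, G ≤ c * b := by
    rintro b ⟨hSb, hbT⟩
    obtain ⟨b₁, hSb₁, hb₁b⟩ := exists_between hSb
    have hb : b ≠ ⊤ := hbT.ne_top
    have hb₁ : b₁ ≠ ⊤ := (hb₁b.trans hbT).ne_top
    rw [← ENNReal.ofReal_toReal hb] at hbT ⊢
    exact h _ _ (by rwa [ENNReal.ofReal_toReal hb₁])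
      ((ENNReal.toReal_lt_toReal hb₁ hb).2 hb₁b) hbT
  have : (𝓝[>] S).NeBot := nhdsGT_neBot_of_exists_gt ⟨T, hST⟩
  exact ge_of_tendsto ((ENNReal.continuousAt_const_mul (Or.inl hc)).tendsto.mono_left
    nhdsWithin_le_nhds) (mem_of_superset (Ioo_mem_nhdsGT hST) hb)

theorem ConvexOn.exists_pos_add_iSup_le {f : ℝ → ℝ} {s : Set ℝ} {a F x y : ℝ}
    (hf : ConvexOn ℝ s f) (hmono : MonotoneOn f s) (h0 : 0 ∈ s) (hf0 : f 0 = 0)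
    (hx : x ∈ s) (hy : y ∈ s) (hx0 : 0 < x) (hxy : x < y) (hF : 0 ≤ F) (hFx : F < f x)
    (ha : 0 < a) :
    ∃ w > 0, ENNReal.ofReal (w * F) + ⨆ t ∈ s, ENNReal.ofReal (t * a - w * f t)
      ≤ ENNReal.ofReal (a * y) := by
  set m := slope f x y
  have hxm : f x ≤ m * x := by
    have h := hf.slope_mono_adjacent h0 hy hx0 hxy
    rwa [hf0, sub_zero, sub_zero, div_le_iff₀ hx0, ← slope_def_field] at h
  have hm : 0 < m := by nlinarith
  set w := a / m
  have ha_eq : a = w * m := (div_mul_cancel₀ a hm.ne').symm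
  have hw : 0 < w := div_pos ha hm
  have hFy : w * F ≤ a * y := by rw [ha_eq]; nlinarith [mul_le_mul_of_nonneg_left hFx.le hw.le]
  refine ⟨w, hw, ?_⟩
  calc _ ≤ ENNReal.ofReal (w * F) + ENNReal.ofReal (a * y - w * F) := by
        refine add_le_add_right (iSup₂_le fun t ht => ENNReal.ofReal_le_ofReal ?_) _
        have := mul_le_mul_of_nonneg_left (hf.slope_mul_sub_le hmono hx hy hxy ht) hw.le
        rw [ha_eq]
        nlinarith [mul_le_mul_of_nonneg_left hFx.le hw.le]
    _ = ENNReal.ofReal (a * y) := by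
        rw [← ENNReal.ofReal_add (by positivity) (by linarith), add_sub_cancel]

theorem iInf_add_iSup_le_ofReal_mul_sSup {Λ : ℝ → ℝ} {t0 : ℝ≥0∞} {F a : ℝ}
    (hconv : ConvexOn ℝ {t : ℝ | 0 ≤ t ∧ ENNReal.ofReal t < t0} Λ)
    (hmono : MonotoneOn Λ {t : ℝ | 0 ≤ t ∧ ENNReal.ofReal t < t0})
    (hΛ0 : Λ 0 = 0) (hF : 0 ≤ F) (ha : 0 < a)
    (hS : sSup {s : ℝ≥0∞ | ∃ t : ℝ,
      (0 ≤ t ∧ ENNReal.ofReal t < t0) ∧ s = ENNReal.ofReal t ∧ Λ t ≤ F} < t0) :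
    ⨅ w > 0, (ENNReal.ofReal (w * F) +
        ⨆ t ∈ {t : ℝ | 0 ≤ t ∧ ENNReal.ofReal t < t0}, ENNReal.ofReal (t * a - w * Λ t))
      ≤ ENNReal.ofReal a * sSup {s : ℝ≥0∞ | ∃ t : ℝ,
        (0 ≤ t ∧ ENNReal.ofReal t < t0) ∧ s = ENNReal.ofReal t ∧ Λ t ≤ F} := by
  refine ENNReal.le_mul_of_forall_lt_ofReal ENNReal.ofReal_ne_top hS fun x y hSx hxy hyt0 => ?_
  have h0D : (0 : ℝ) ∈ {t : ℝ | 0 ≤ t ∧ ENNReal.ofReal t < t0} :=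
    ⟨le_rfl, by simpa using zero_le.trans_lt hS⟩
  have hx0 : 0 < x := ENNReal.ofReal_pos.mp (zero_le.trans_lt hSx)
  have hxD : x ∈ {t : ℝ | 0 ≤ t ∧ ENNReal.ofReal t < t0} :=
    ⟨hx0.le, (ENNReal.ofReal_le_ofReal hxy.le).trans_lt hyt0⟩
  have hFx : F < Λ x := not_le.mp fun hxF => hSx.not_ge (le_sSup ⟨x, hxD, rfl, hxF⟩)
  obtain ⟨w, hw, hgw⟩ := hconv.exists_pos_add_iSup_le hmono h0D hΛ0 hxD
    ⟨hx0.le.trans hxy.le, hyt0⟩ hx0 hxy hF hFx ha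
  rw [← ENNReal.ofReal_mul ha.le]
  exact iInf₂_le_of_le w hw hgw

theorem inf_g_eq_inverse_general
    (Λ : ℝ → ℝ) (t0 : ℝ≥0∞) (ht0 : 0 < t0)
    (hΛ0 : Λ 0 = 0)
    (hconv : StrictConvexOn ℝ {t : ℝ | 0 ≤ t ∧ ENNReal.ofReal t < t0} Λ)
    (hderiv0 : HasDerivWithinAt Λ 0 (Set.Ici 0) 0)
    (F a : ℝ) (hF : 0 ≤ F) (ha : 0 < a)
    (I : ℝ → ℝ≥0∞)
    (hI : ∀ x : ℝ, I x =
      ⨆ t ∈ {t : ℝ | 0 ≤ t ∧ ENNReal.ofReal t < t0}, ENNReal.ofReal (t * x - Λ t))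
    (g0 : ℝ≥0∞)
    (hg0 : Tendsto (fun w : ℝ => ENNReal.ofReal w * I (a / w))
      (nhdsWithin 0 (Set.Ioi 0)) (nhds g0)) :
    (g0 ⊓ ⨅ (w : ℝ) (_ : 0 < w),
        (ENNReal.ofReal (w * F) + ENNReal.ofReal w * I (a / w)))
      = ENNReal.ofReal a *
        sSup {s : ℝ≥0∞ | ∃ t : ℝ,
          (0 ≤ t ∧ ENNReal.ofReal t < t0) ∧ s = ENNReal.ofReal t ∧ Λ t ≤ F} := by
  set D := {t : ℝ | 0 ≤ t ∧ ENNReal.ofReal t < t0}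
  have h0D : (0 : ℝ) ∈ D := ⟨le_rfl, by simpa using ht0⟩
  have hmono : MonotoneOn Λ D := hconv.convexOn.monotoneOn_of_hasDerivWithinAt_Ioi h0D
    (fun t ht => ht.1) (hderiv0.mono Ioi_subset_Ici_self) le_rfl
  have hwI : ∀ w > 0, ENNReal.ofReal w * I (a / w) = ⨆ t ∈ D, ENNReal.ofReal (t * a - w * Λ t) :=
    fun w hw => by rw [hI, ENNReal.ofReal_mul_iSup_ofReal_sub hw]
  have hg : Tendsto (fun w : ℝ => ENNReal.ofReal (w * F) + ENNReal.ofReal w * I (a / w))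
      (𝓝[>] 0) (𝓝 g0) := by
    simpa using ((ENNReal.tendsto_ofReal (tendsto_id.mul_const F)).mono_left
      nhdsWithin_le_nhds).add hg0
  set S := sSup {s : ℝ≥0∞ | ∃ t : ℝ,
    (0 ≤ t ∧ ENNReal.ofReal t < t0) ∧ s = ENNReal.ofReal t ∧ Λ t ≤ F}
  apply le_antisymm
  · obtain hS | hS : S < t0 ∨ S = t0 :=
      (sSup_le (by rintro _ ⟨t, htD, rfl, -⟩; exact htD.2.le)).lt_or_eq
    · exact inf_le_right.trans ((iInf₂_mono fun w hw => by rw [hwI w hw]).trans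
        (iInf_add_iSup_le_ofReal_mul_sSup hconv.convexOn hmono hΛ0 hF ha hS))
    · refine inf_le_left.trans (le_of_tendsto hg0 (eventually_nhdsWithin_of_forall fun w hw => ?_))
      rw [hwI w hw, hS]
      exact ENNReal.iSup_ofReal_sub_le_ofReal_mul ha.le (le_of_lt hw)
        (fun t ht => hΛ0 ▸ hmono h0D ht ht.1) fun t ht => ht.2.le
  · rw [ENNReal.mul_sSup]
    refine iSup₂_le ?_
    rintro _ ⟨t, htD, rfl, htF⟩
    refine le_inf_iInf_of_tendsto_nhdsGT hg fun w hw => ?_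
    rw [hwI w hw]
    exact ENNReal.ofReal_mul_ofReal_le_add_iSup ha.le hw.le htD htF

/-- Let `Λ` be convex with `Λ(0) = 0`, differentiable and strictly convex
on `[0, t0)` where `t0 = sup{t : Λ(t) < ∞} > 0` (here `t0 : ℝ≥0∞`, and `Λ` is the
real-valued restriction to its domain `D = {t | 0 ≤ t, t < t0}`), with `Λ'(0) = 0`.
Let `I(x) = sup_{t ∈ D} (t x - Λ(t))⁺ ∈ [0,∞]` be its Legendre transform, `F ≥ 0`,
`a > 0`, and `g(w) = w F + w I(a/w)` for `w > 0`, with `g(0) = lim_{w ↓ 0} w I(a/w)`.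
Then `inf_{w ≥ 0} g(w) = a Λ⁻¹(F)` where `Λ⁻¹` is the (generalized) inverse of `Λ`,
equal to `t0` if `F ≥ Λ(t0⁻)`, written here as `sSup {t ∈ D : Λ(t) ≤ F}`. -/
theorem inf_g_eq_inverse
    (Λ : ℝ → ℝ) (t0 : ℝ≥0∞) (ht0 : 0 < t0)
    (hΛ0 : Λ 0 = 0)
    (hconv : StrictConvexOn ℝ {t : ℝ | 0 ≤ t ∧ ENNReal.ofReal t < t0} Λ)
    (hdiff : ∀ t : ℝ, 0 < t → ENNReal.ofReal t < t0 → DifferentiableAt ℝ Λ t)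
    (hderiv0 : HasDerivWithinAt Λ 0 (Set.Ici 0) 0)
    (F a : ℝ) (hF : 0 ≤ F) (ha : 0 < a)
    (I : ℝ → ℝ≥0∞)
    (hI : ∀ x : ℝ, I x =
      ⨆ t ∈ {t : ℝ | 0 ≤ t ∧ ENNReal.ofReal t < t0}, ENNReal.ofReal (t * x - Λ t))
    (g0 : ℝ≥0∞)
    (hg0 : Tendsto (fun w : ℝ => ENNReal.ofReal w * I (a / w))
      (nhdsWithin 0 (Set.Ioi 0)) (nhds g0)) :
    (g0 ⊓ ⨅ (w : ℝ) (_ : 0 < w),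
        (ENNReal.ofReal (w * F) + ENNReal.ofReal w * I (a / w)))
      = ENNReal.ofReal a *
        sSup {s : ℝ≥0∞ | ∃ t : ℝ,
          (0 ≤ t ∧ ENNReal.ofReal t < t0) ∧ s = ENNReal.ofReal t ∧ Λ t ≤ F} :=
  inf_g_eq_inverse_general Λ t0 ht0 hΛ0 hconv hderiv0 F a hF ha I hI g0 hg0
end

section
/- In the setting of the previous optimization, if additionally $F < \Lambda(t_0)$ (with $\Lambda(t_0) := \lim_{t\uparrow t_0}\Lambda(t)$), then the infimum of $g(w) = wF + w\,\mathrm{I}(a/w)$ over $w \ge 0$ is attained at the unique point $w^* = a / \big(\Lambda' \circ \Lambda^{-1}(F)\big)$, and $g$ is decreasing on $[0, w^*]$ and increasing on $[w^*, \infty)$. -/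
open MeasureTheory Real Filter Topology
open scoped ENNReal

/-- In the setting of Statement 4, if moreover `F < Λ(t0⁻)`
(the left limit, written as the supremum of `Λ` over the domain `D`), then the infimum
of `g(w) = w F + w I(a/w)` over `w ≥ 0` is attained at the unique point
`w* = a / (Λ' ∘ Λ⁻¹(F))` (with `Λ⁻¹(F)` the point `tF ∈ D` where `Λ(tF) = F`), and
`g` is decreasing on `[0, w*]` and increasing on `[w*, ∞)`. -/
theorem inf_g_attained
    (Λ : ℝ → ℝ) (t0 : ℝ≥0∞) (ht0 : 0 < t0)
    (hΛ0 : Λ 0 = 0)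
    (hconv : StrictConvexOn ℝ {t : ℝ | 0 ≤ t ∧ ENNReal.ofReal t < t0} Λ)
    (hdiff : ∀ t : ℝ, 0 < t → ENNReal.ofReal t < t0 → DifferentiableAt ℝ Λ t)
    (hderiv0 : HasDerivWithinAt Λ 0 (Set.Ici 0) 0)
    (F a : ℝ) (hF : 0 ≤ F) (ha : 0 < a)
    (hFlt : ENNReal.ofReal F <
      ⨆ t ∈ {t : ℝ | 0 ≤ t ∧ ENNReal.ofReal t < t0}, ENNReal.ofReal (Λ t))
    (I : ℝ → ℝ≥0∞)
    (hI : ∀ x : ℝ, I x =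
      ⨆ t ∈ {t : ℝ | 0 ≤ t ∧ ENNReal.ofReal t < t0}, ENNReal.ofReal (t * x - Λ t))
    (G : ℝ → ℝ≥0∞)
    (hG : ∀ w : ℝ, 0 < w →
      G w = ENNReal.ofReal (w * F) + ENNReal.ofReal w * I (a / w))
    (hG0 : Tendsto (fun w : ℝ => ENNReal.ofReal (w * F) + ENNReal.ofReal w * I (a / w))
      (nhdsWithin 0 (Set.Ioi 0)) (nhds (G 0))) :
    ∀ tF : ℝ, 0 ≤ tF → ENNReal.ofReal tF < t0 → Λ tF = F → 0 < deriv Λ tF →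
      (∀ w : ℝ, 0 ≤ w → G (a / deriv Λ tF) ≤ G w) ∧
      (∀ w : ℝ, 0 ≤ w → G w = G (a / deriv Λ tF) → w = a / deriv Λ tF) ∧
      AntitoneOn G (Set.Icc 0 (a / deriv Λ tF)) ∧
      MonotoneOn G (Set.Ici (a / deriv Λ tF)) := by
  intro tF htF0 htFt0 hΛF hd
  set S : Set ℝ := {t : ℝ | 0 ≤ t ∧ ENNReal.ofReal t < t0} with hSdef
  have h0S : (0 : ℝ) ∈ S := ⟨le_refl 0, by simpa using ht0⟩
  haveI : Nonempty S := ⟨⟨0, h0S⟩⟩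
  -- tF is positive
  have htFpos : 0 < tF := by
    rcases htF0.lt_or_eq with h | h
    · exact h
    · exfalso
      have hzero : deriv Λ tF = 0 := by
        rw [← h]
        by_cases hdf : DifferentiableAt ℝ Λ 0
        · have h1 : derivWithin Λ (Set.Ici 0) 0 = deriv Λ 0 :=
            (hdf.hasDerivAt.hasDerivWithinAt (s := Set.Ici (0:ℝ))).derivWithin
              ((uniqueDiffOn_Ici 0) 0 Set.self_mem_Ici)
          have h2 : derivWithin Λ (Set.Ici 0) 0 = 0 :=
            hderiv0.derivWithin ((uniqueDiffOn_Ici 0) 0 Set.self_mem_Ici)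
          rw [← h1, h2]
        · exact deriv_zero_of_not_differentiableAt hdf
      rw [hzero] at hd; exact lt_irrefl 0 hd
  have hdiffF : DifferentiableAt ℝ Λ tF := hdiff tF htFpos htFt0
  have hdF : HasDerivAt Λ (deriv Λ tF) tF := hdiffF.hasDerivAt
  set d := deriv Λ tF with hdd
  have htFS : tF ∈ S := ⟨htF0, htFt0⟩
  have hcv : ConvexOn ℝ S Λ := hconv.convexOn
  have hwpos : 0 < a / d := div_pos ha hd
  -- key gradient inequality
  have hkey : ∀ t ∈ S, t * a + (a / d) * (F - Λ t) ≤ tF * a := by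
    intro t htS
    rcases lt_trichotomy t tF with h | h | h
    · have hs := hcv.slope_le_deriv htS htFS h hdiffF
      rw [slope_def_field] at hs
      have h2 : Λ tF - Λ t ≤ d * (tF - t) := by
        rw [div_le_iff₀ (by linarith)] at hs; linarith
      rw [hΛF] at h2
      have h3 : (a / d) * (F - Λ t) ≤ (a / d) * (d * (tF - t)) :=
        mul_le_mul_of_nonneg_left h2 hwpos.le
      have h4 : (a / d) * (d * (tF - t)) = a * (tF - t) := by
        field_simp
      linarith
    · rw [h, hΛF]; simp
    · have hs := hcv.deriv_le_slope htFS htS h hdiffF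
      rw [slope_def_field] at hs
      have h2 : d * (t - tF) ≤ Λ t - Λ tF := by
        rw [le_div_iff₀ (by linarith)] at hs; linarith
      rw [hΛF] at h2
      have h3 : (a / d) * (d * (t - tF)) ≤ (a / d) * (Λ t - F) :=
        mul_le_mul_of_nonneg_left h2 hwpos.le
      have h4 : (a / d) * (d * (t - tF)) = a * (t - tF) := by
        field_simp
      linarith
  -- the comparison function
  set Φ : ℝ → ℝ≥0∞ := fun w => ⨆ t : S, ENNReal.ofReal ((t : ℝ) * a + w * (F - Λ t)) with hΦdef
  -- representation of G on (0, ∞)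
  have hrep : ∀ w : ℝ, 0 < w →
      ENNReal.ofReal (w * F) + ENNReal.ofReal w * I (a / w) = Φ w := by
    intro w hw
    rw [hI]
    rw [iSup_subtype']
    rw [ENNReal.mul_iSup]
    simp only [← ENNReal.ofReal_mul hw.le]
    have hterm : ∀ t : S, w * ((t : ℝ) * (a / w) - Λ t) = (t : ℝ) * a - w * Λ t := by
      intro t; field_simp
    simp only [hterm]
    rw [ENNReal.add_iSup]
    apply le_antisymm
    · refine iSup_le fun t => ?_
      rcases le_or_gt ((t : ℝ) * a - w * Λ t) 0 with hneg | hpos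
      · have h1 : ENNReal.ofReal ((t : ℝ) * a - w * Λ t) = 0 := by
          simpa using ENNReal.ofReal_le_ofReal hneg
        rw [h1, add_zero]
        refine le_trans ?_ (le_iSup _ (⟨0, h0S⟩ : S))
        apply ENNReal.ofReal_le_ofReal
        simp [hΛ0]
      · rw [← ENNReal.ofReal_add (by positivity) hpos.le]
        refine le_trans ?_ (le_iSup _ t)
        exact ENNReal.ofReal_le_ofReal (le_of_eq (by ring))
    · refine iSup_le fun t => ?_
      have h1 : (t : ℝ) * a + w * (F - Λ t) = w * F + ((t : ℝ) * a - w * Λ t) := by ring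
      rw [h1]
      exact le_iSup_of_le t ENNReal.ofReal_add_le
  have hGΦpos : ∀ w : ℝ, 0 < w → G w = Φ w := fun w hw => (hG w hw).trans (hrep w hw)
  -- monotonicity of Φ
  have hanti : ∀ w1 w2 : ℝ, 0 ≤ w1 → w1 ≤ w2 → w2 ≤ a / d → Φ w2 ≤ Φ w1 := by
    intro w1 w2 h1 h12 h2
    refine iSup_le fun t => ?_
    rcases le_or_gt (Λ (t : ℝ)) F with h | h
    · refine le_trans ?_ (le_iSup _ (⟨tF, htFS⟩ : S))
      apply ENNReal.ofReal_le_ofReal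
      show (t : ℝ) * a + w2 * (F - Λ t) ≤ tF * a + w1 * (F - Λ tF)
      rw [hΛF]
      have e1 : (t : ℝ) * a + w2 * (F - Λ t) ≤ (t : ℝ) * a + (a / d) * (F - Λ t) := by
        nlinarith [mul_nonneg (sub_nonneg.2 h2) (sub_nonneg.2 h)]
      have e2 := hkey (t : ℝ) t.2
      linarith
    · refine le_trans ?_ (le_iSup _ t)
      apply ENNReal.ofReal_le_ofReal
      nlinarith [mul_nonneg (sub_nonneg.2 h12) (sub_nonneg.2 h.le)]
  have hmono : ∀ w1 w2 : ℝ, a / d ≤ w1 → w1 ≤ w2 → Φ w1 ≤ Φ w2 := by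
    intro w1 w2 h1 h12
    refine iSup_le fun t => ?_
    rcases le_or_gt (Λ (t : ℝ)) F with h | h
    · refine le_trans ?_ (le_iSup _ t)
      apply ENNReal.ofReal_le_ofReal
      nlinarith [mul_nonneg (sub_nonneg.2 h12) (sub_nonneg.2 h)]
    · refine le_trans ?_ (le_iSup _ (⟨tF, htFS⟩ : S))
      apply ENNReal.ofReal_le_ofReal
      show (t : ℝ) * a + w1 * (F - Λ t) ≤ tF * a + w2 * (F - Λ tF)
      rw [hΛF]
      have e1 : (t : ℝ) * a + w1 * (F - Λ t) ≤ (t : ℝ) * a + (a / d) * (F - Λ t) := by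
        nlinarith [mul_nonneg (sub_nonneg.2 h1) (sub_nonneg.2 h.le)]
      have e2 := hkey (t : ℝ) t.2
      linarith
  -- value at the minimizer
  have hΦstar : Φ (a / d) = ENNReal.ofReal (tF * a) := by
    apply le_antisymm
    · exact iSup_le fun t => ENNReal.ofReal_le_ofReal (hkey (t : ℝ) t.2)
    · refine le_trans ?_ (le_iSup _ (⟨tF, htFS⟩ : S))
      apply ENNReal.ofReal_le_ofReal
      show tF * a ≤ tF * a + (a / d) * (F - Λ tF)
      rw [hΛF]; simp
  -- G 0 = Φ 0
  have hΦ0cont : Tendsto Φ (nhdsWithin 0 (Set.Ioi 0)) (nhds (Φ 0)) := by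
    rw [tendsto_order]
    constructor
    · intro c hc
      have : c < ⨆ t : S, ENNReal.ofReal ((t : ℝ) * a + 0 * (F - Λ t)) := hc
      rw [lt_iSup_iff] at this
      obtain ⟨t, ht⟩ := this
      have hcont : Tendsto (fun w : ℝ => ENNReal.ofReal ((t : ℝ) * a + w * (F - Λ t)))
          (nhdsWithin 0 (Set.Ioi 0)) (nhds (ENNReal.ofReal ((t : ℝ) * a + 0 * (F - Λ t)))) := by
        apply Tendsto.mono_left _ nhdsWithin_le_nhds
        exact (ENNReal.continuous_ofReal.comp
          (continuous_const.add (continuous_id.mul continuous_const))).tendsto 0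
      filter_upwards [hcont.eventually_const_lt ht] with w hw
      refine hw.trans_le ?_
      show ENNReal.ofReal ((t : ℝ) * a + w * (F - Λ t)) ≤
        ⨆ t : S, ENNReal.ofReal ((t : ℝ) * a + w * (F - Λ t))
      exact le_iSup (fun t : S => ENNReal.ofReal ((t : ℝ) * a + w * (F - Λ t))) t
    · intro c hc
      filter_upwards [Ioc_mem_nhdsGT hwpos] with w hw
      exact lt_of_le_of_lt (hanti 0 w le_rfl hw.1.le hw.2) hc
  have hG0Φ : G 0 = Φ 0 := by
    have h1 : Tendsto Φ (nhdsWithin 0 (Set.Ioi 0)) (nhds (G 0)) := by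
      apply hG0.congr'
      filter_upwards [self_mem_nhdsWithin] with w hw
      exact hrep w hw
    exact tendsto_nhds_unique h1 hΦ0cont
  have hGΦ : ∀ w : ℝ, 0 ≤ w → G w = Φ w := by
    intro w hw
    rcases hw.lt_or_eq with h | h
    · exact hGΦpos w h
    · rw [← h]; exact hG0Φ
  -- S is a neighborhood of tF
  have hSnhds : S ∈ nhds tF := by
    have hop : IsOpen ({t : ℝ | 0 < t} ∩ {t : ℝ | ENNReal.ofReal t < t0}) :=
      (isOpen_lt continuous_const continuous_id).inter
        (isOpen_lt ENNReal.continuous_ofReal continuous_const)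
    refine Filter.mem_of_superset (hop.mem_nhds ⟨htFpos, htFt0⟩) ?_
    exact fun x hx => ⟨hx.1.le, hx.2⟩
  refine ⟨?_, ?_, ?_, ?_⟩
  · intro w hw
    rw [hGΦ _ hwpos.le, hGΦ w hw]
    rcases le_total w (a / d) with h | h
    · exact hanti w (a / d) hw h le_rfl
    · exact hmono (a / d) w le_rfl h
  · intro w hw heq
    by_contra hne
    rw [hGΦ w hw, hGΦ _ hwpos.le, hΦstar] at heq
    have hslope : Tendsto (slope Λ tF) (nhdsWithin tF {tF}ᶜ) (nhds d) :=
      hasDerivAt_iff_tendsto_slope.1 hdF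
    obtain ⟨t, htS, hineq⟩ : ∃ t, t ∈ S ∧ w * (Λ t - F) < a * (t - tF) := by
      rcases (Ne.lt_or_gt hne) with hlt | hgt
      · -- w < a/d
        have hs' : Tendsto (slope Λ tF) (nhdsWithin tF (Set.Ioi tF)) (nhds d) :=
          hslope.mono_left (nhdsWithin_mono _ fun x hx => ne_of_gt hx)
        rcases hw.lt_or_eq with hwpos' | hw0
        · have haw : d < a / w := by
            rw [lt_div_iff₀ hwpos']
            have := (lt_div_iff₀ hd).1 hlt
            linarith
          have hev : ∀ᶠ t in nhdsWithin tF (Set.Ioi tF),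
              slope Λ tF t < a / w ∧ t ∈ S ∧ tF < t := by
            filter_upwards [hs'.eventually_lt_const haw,
              nhdsWithin_le_nhds hSnhds, self_mem_nhdsWithin] with t h1 h2 h3
            exact ⟨h1, h2, h3⟩
          obtain ⟨t, hst, htS, htgt⟩ := hev.exists
          refine ⟨t, htS, ?_⟩
          rw [slope_def_field, hΛF] at hst
          have htgt' : tF < t := htgt
          have h1 : Λ t - F < (a / w) * (t - tF) :=
            (div_lt_iff₀ (by linarith)).1 hst
          have h2 : w * (Λ t - F) < w * ((a / w) * (t - tF)) :=
            (mul_lt_mul_iff_right₀ hwpos').2 h1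
          have h3 : w * ((a / w) * (t - tF)) = a * (t - tF) := by
            field_simp
          linarith
        · have hev : ∀ᶠ t in nhdsWithin tF (Set.Ioi tF), t ∈ S ∧ tF < t := by
            filter_upwards [nhdsWithin_le_nhds hSnhds, self_mem_nhdsWithin] with t h2 h3
            exact ⟨h2, h3⟩
          obtain ⟨t, htS, htgt⟩ := hev.exists
          refine ⟨t, htS, ?_⟩
          have htgt' : tF < t := htgt
          rw [← hw0]
          nlinarith
      · -- a/d < w
        have hwpos' : 0 < w := lt_trans hwpos hgt
        have haw : a / w < d := by
          rw [div_lt_iff₀ hwpos']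
          have := (div_lt_iff₀ hd).1 hgt
          linarith
        have hs' : Tendsto (slope Λ tF) (nhdsWithin tF (Set.Iio tF)) (nhds d) :=
          hslope.mono_left (nhdsWithin_mono _ fun x hx => ne_of_lt hx)
        have hev : ∀ᶠ t in nhdsWithin tF (Set.Iio tF),
            a / w < slope Λ tF t ∧ t ∈ S ∧ t < tF := by
          filter_upwards [hs'.eventually_const_lt haw,
            nhdsWithin_le_nhds hSnhds, self_mem_nhdsWithin] with t h1 h2 h3
          exact ⟨h1, h2, h3⟩
        obtain ⟨t, hst, htS, htlt⟩ := hev.exists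
        refine ⟨t, htS, ?_⟩
        rw [slope_def_field, hΛF] at hst
        have htlt' : t < tF := htlt
        have h1 : Λ t - F < (a / w) * (t - tF) := by
          have := (lt_div_iff_of_neg (by linarith : t - tF < 0)).1 hst
          linarith
        have h2 : w * (Λ t - F) < w * ((a / w) * (t - tF)) :=
          (mul_lt_mul_iff_right₀ hwpos').2 h1
        have h3 : w * ((a / w) * (t - tF)) = a * (t - tF) := by
          field_simp
        linarith
    have hposval : (0 : ℝ) < t * a + w * (F - Λ t) := by nlinarith
    have hgt2 : ENNReal.ofReal (tF * a) < ENNReal.ofReal (t * a + w * (F - Λ t)) := by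
      rw [ENNReal.ofReal_lt_ofReal_iff hposval]
      nlinarith
    have hle : ENNReal.ofReal (t * a + w * (F - Λ t)) ≤ Φ w := by
      show _ ≤ ⨆ t : S, ENNReal.ofReal ((t : ℝ) * a + w * (F - Λ t))
      exact le_iSup (fun t : S => ENNReal.ofReal ((t : ℝ) * a + w * (F - Λ t))) ⟨t, htS⟩
    rw [heq] at hle
    exact absurd (hgt2.trans_le hle) (lt_irrefl _)
  · intro x hx y hy hxy
    rw [hGΦ x hx.1, hGΦ y hy.1]
    exact hanti x y hx.1 hxy hy.2
  · intro x hx y hy hxy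
    rw [hGΦ x (le_trans hwpos.le hx), hGΦ y (le_trans hwpos.le (le_trans hx hxy))]
    exact hmono x y hx hxy
end

section
/- Let $\mathrm{I}_-, \mathrm{I}_+ : [0,\infty)\to[0,\infty]$ be Legendre transforms as above of convex functions $\Lambda_-, \Lambda_+$, let $F \ge 0$ and $a > 0$, and define $g(u,v) = (v-u)F - u\,\mathrm{I}_-(a/u) - (1-v)\,\mathrm{I}_+(a/(1-v))$ for $0 \le u \le v \le 1$. If $w_-^* + w_+^* \le 1$, where $w_-^* = a/(\Lambda_-'\circ\Lambda_-^{-1}(F))$ and $w_+^* = a/(\Lambda_+'\circ\Lambda_+^{-1}(F))$, then $\sup_{0\le u\le v\le 1} g(u,v) = F - a\,\Lambda_-^{-1}(F) - a\,\Lambda_+^{-1}(F)$. -/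
open MeasureTheory Real Filter Topology
open scoped ENNReal

section Aux
open Filter Topology Set
open scoped ENNReal

section Side
variable {Λ : ℝ → ℝ} {t0 : ℝ≥0∞}

/-- membership downward closed -/
lemma memD_of_le {t s : ℝ} (hs : 0 ≤ s) (hst : s ≤ t)
    (ht : 0 ≤ t ∧ ENNReal.ofReal t < t0) : 0 ≤ s ∧ ENNReal.ofReal s < t0 :=
  ⟨hs, lt_of_le_of_lt (ENNReal.ofReal_le_ofReal hst) ht.2⟩

lemma zero_memD (ht0 : 0 < t0) : (0:ℝ) ∈ {t : ℝ | 0 ≤ t ∧ ENNReal.ofReal t < t0} := by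
  refine ⟨le_refl 0, ?_⟩; simpa using ht0

/-- slope from 0 is nonneg on D -/
lemma slope_nonneg (hΛ0 : Λ 0 = 0)
    (hconv : StrictConvexOn ℝ {t : ℝ | 0 ≤ t ∧ ENNReal.ofReal t < t0} Λ)
    (hd0 : HasDerivWithinAt Λ 0 (Set.Ici 0) 0)
    {t : ℝ} (ht : 0 < t) (ht0 : ENNReal.ofReal t < t0) : 0 ≤ Λ t / t := by
  have htD : t ∈ {t : ℝ | 0 ≤ t ∧ ENNReal.ofReal t < t0} := ⟨ht.le, ht0⟩
  have h0D : (0:ℝ) ∈ {t : ℝ | 0 ≤ t ∧ ENNReal.ofReal t < t0} :=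
    memD_of_le le_rfl ht.le htD
  have hslope : Tendsto (slope Λ 0) (𝓝[(Set.Ici (0:ℝ)) \ {0}] 0) (𝓝 0) :=
    hasDerivWithinAt_iff_tendsto_slope.1 hd0
  have hIoi : (Set.Ici (0:ℝ)) \ {0} = Set.Ioi 0 := by
    ext x; simp [lt_iff_le_and_ne, eq_comm, And.comm]
  rw [hIoi] at hslope
  have hmono := hconv.convexOn.slope_mono h0D
  have hev : ∀ᶠ s in 𝓝[>] (0:ℝ), slope Λ 0 s ≤ slope Λ 0 t := by
    filter_upwards [Ioo_mem_nhdsGT_of_mem (by constructor <;> simp [ht] : (0:ℝ) ∈ Set.Ico 0 t)]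
      with s hs
    exact hmono ⟨memD_of_le hs.1.le (hs.2.le) htD, by simpa using hs.1.ne'⟩
      ⟨htD, by simpa using ht.ne'⟩ hs.2.le
  have := le_of_tendsto hslope hev
  rw [slope_def_field, hΛ0, sub_zero, sub_zero] at this
  exact this

lemma lambda_nonneg (hΛ0 : Λ 0 = 0)
    (hconv : StrictConvexOn ℝ {t : ℝ | 0 ≤ t ∧ ENNReal.ofReal t < t0} Λ)
    (hd0 : HasDerivWithinAt Λ 0 (Set.Ici 0) 0)
    {t : ℝ} (ht : 0 ≤ t) (ht0 : ENNReal.ofReal t < t0) : 0 ≤ Λ t := by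
  rcases eq_or_lt_of_le ht with h | h
  · rw [← h, hΛ0]
  · have := slope_nonneg hΛ0 hconv hd0 h ht0
    have := mul_nonneg this h.le
    rwa [div_mul_cancel₀] at this
    exact h.ne'

end Side

section Side2
variable {Λ : ℝ → ℝ} {t0 : ℝ≥0∞}

lemma lambda_pos (hΛ0 : Λ 0 = 0)
    (hconv : StrictConvexOn ℝ {t : ℝ | 0 ≤ t ∧ ENNReal.ofReal t < t0} Λ)
    (hd0 : HasDerivWithinAt Λ 0 (Set.Ici 0) 0)
    {t : ℝ} (ht : 0 < t) (ht0 : ENNReal.ofReal t < t0) : 0 < Λ t := by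
  have htD : t ∈ {t : ℝ | 0 ≤ t ∧ ENNReal.ofReal t < t0} := ⟨ht.le, ht0⟩
  have h0D : (0:ℝ) ∈ {t : ℝ | 0 ≤ t ∧ ENNReal.ofReal t < t0} := memD_of_le le_rfl ht.le htD
  have h2 : Λ (t/2) ≥ 0 :=
    lambda_nonneg hΛ0 hconv hd0 (by linarith) (memD_of_le (by linarith) (by linarith) htD).2
  have hstrict := hconv.slope_strict_mono_adjacent h0D htD (by linarith : (0:ℝ) < t/2)
    (by linarith : t/2 < t)
  rw [hΛ0, sub_zero, sub_zero] at hstrict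
  have h3 : t - t/2 = t/2 := by ring
  rw [h3] at hstrict
  have := (div_lt_div_iff_of_pos_right (by linarith : (0:ℝ) < t/2)).1 hstrict
  linarith

/-- strictly above F beyond a point where Λ τ = F > 0 -/
lemma lambda_gt (hΛ0 : Λ 0 = 0)
    (hconv : StrictConvexOn ℝ {t : ℝ | 0 ≤ t ∧ ENNReal.ofReal t < t0} Λ)
    (hd0 : HasDerivWithinAt Λ 0 (Set.Ici 0) 0)
    {τ t : ℝ} (hτ : 0 < τ) (hτt : τ < t) (ht0 : ENNReal.ofReal t < t0) :
    Λ τ < Λ t := by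
  have htD : t ∈ {t : ℝ | 0 ≤ t ∧ ENNReal.ofReal t < t0} := ⟨by linarith, ht0⟩
  have h0D : (0:ℝ) ∈ {t : ℝ | 0 ≤ t ∧ ENNReal.ofReal t < t0} :=
    memD_of_le le_rfl (by linarith) htD
  have hτD := memD_of_le hτ.le hτt.le htD
  have hstrict := hconv.slope_strict_mono_adjacent h0D htD hτ hτt
  rw [hΛ0, sub_zero, sub_zero] at hstrict
  have hs0 : 0 ≤ Λ τ / τ := slope_nonneg hΛ0 hconv hd0 hτ hτD.2
  have h1 : 0 ≤ (Λ t - Λ τ) / (t - τ) := le_trans hs0 hstrict.le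
  have hpos : 0 < (Λ t - Λ τ) / (t - τ) := lt_of_le_of_lt hs0 hstrict
  nlinarith [mul_pos hpos (by linarith : (0:ℝ) < t - τ),
    div_mul_cancel₀ (Λ t - Λ τ) (by linarith : (t:ℝ) - τ ≠ 0)]

/-- tangent line inequality -/
lemma tangent_le (hconv : StrictConvexOn ℝ {t : ℝ | 0 ≤ t ∧ ENNReal.ofReal t < t0} Λ)
    (hdiff : ∀ t : ℝ, 0 < t → ENNReal.ofReal t < t0 → DifferentiableAt ℝ Λ t)
    {τ t : ℝ} (hτ : 0 < τ) (hτ0 : ENNReal.ofReal τ < t0)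
    (ht : 0 ≤ t) (ht0 : ENNReal.ofReal t < t0) :
    Λ τ + deriv Λ τ * (t - τ) ≤ Λ t := by
  have hτD : τ ∈ {t : ℝ | 0 ≤ t ∧ ENNReal.ofReal t < t0} := ⟨hτ.le, hτ0⟩
  have htD : t ∈ {t : ℝ | 0 ≤ t ∧ ENNReal.ofReal t < t0} := ⟨ht, ht0⟩
  have hD := hdiff τ hτ hτ0
  rcases lt_trichotomy t τ with h | h | h
  · have := hconv.convexOn.slope_le_deriv htD hτD h hD
    rw [slope_def_field] at this
    have h2 := (div_le_iff₀ (by linarith : (0:ℝ) < τ - t)).1 this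
    nlinarith
  · simp [h]
  · have := hconv.convexOn.deriv_le_slope hτD htD h hD
    rw [slope_def_field] at this
    have h2 := (le_div_iff₀ (by linarith : (0:ℝ) < t - τ)).1 this
    nlinarith

/-- deriv at τ ≥ Λ τ / τ -/
lemma deriv_ge (hΛ0 : Λ 0 = 0)
    (hconv : StrictConvexOn ℝ {t : ℝ | 0 ≤ t ∧ ENNReal.ofReal t < t0} Λ)
    (hdiff : ∀ t : ℝ, 0 < t → ENNReal.ofReal t < t0 → DifferentiableAt ℝ Λ t)
    {τ : ℝ} (hτ : 0 < τ) (hτ0 : ENNReal.ofReal τ < t0) :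
    Λ τ / τ ≤ deriv Λ τ := by
  have hτD : τ ∈ {t : ℝ | 0 ≤ t ∧ ENNReal.ofReal t < t0} := ⟨hτ.le, hτ0⟩
  have h0D : (0:ℝ) ∈ {t : ℝ | 0 ≤ t ∧ ENNReal.ofReal t < t0} := memD_of_le le_rfl hτ.le hτD
  have := hconv.convexOn.slope_le_deriv h0D hτD hτ (hdiff τ hτ hτ0)
  rwa [slope_def_field, hΛ0, sub_zero, sub_zero] at this

end Side2

section Side3
variable {Λ : ℝ → ℝ} {t0 : ℝ≥0∞}

lemma T_formula {a : ℝ} (ha : 0 < a) (I : ℝ → ℝ≥0∞)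
    (hI : ∀ x : ℝ, I x =
      ⨆ t ∈ {t : ℝ | 0 ≤ t ∧ ENNReal.ofReal t < t0}, ENNReal.ofReal (t * x - Λ t))
    {u : ℝ} (hu : 0 < u) :
    ENNReal.ofReal u * I (a / u) =
      ⨆ t ∈ {t : ℝ | 0 ≤ t ∧ ENNReal.ofReal t < t0}, ENNReal.ofReal (t * a - u * Λ t) := by
  rw [hI, ENNReal.mul_iSup]
  refine iSup_congr fun t => ?_
  rw [ENNReal.mul_iSup]
  refine iSup_congr fun htD => ?_
  rw [← ENNReal.ofReal_mul hu.le]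
  congr 1
  field_simp

lemma F_pos (ht0 : 0 < t0)
    (hΛ0 : Λ 0 = 0)
    (hconv : StrictConvexOn ℝ {t : ℝ | 0 ≤ t ∧ ENNReal.ofReal t < t0} Λ)
    (hd0 : HasDerivWithinAt Λ 0 (Set.Ici 0) 0)
    {F a : ℝ} (hF : 0 ≤ F) (ha : 0 < a) {s : ℝ≥0∞}
    (hs : (∃ t : ℝ, (0 ≤ t ∧ ENNReal.ofReal t < t0) ∧ Λ t = F ∧
          s = ENNReal.ofReal (deriv Λ t)) ∨
        (∀ t : ℝ, 0 ≤ t → ENNReal.ofReal t < t0 → Λ t < F))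
    (h1 : ENNReal.ofReal a / s ≤ 1) : 0 < F := by
  rcases eq_or_lt_of_le hF with h | h
  · exfalso
    rcases hs with ⟨τ, hτD, hΛτ, hseq⟩ | hB
    · rcases eq_or_lt_of_le hτD.1 with hτ0 | hτ0
      · -- τ = 0
        have hderiv : deriv Λ 0 = 0 := by
          by_cases hdiff : DifferentiableAt ℝ Λ 0
          · exact (uniqueDiffOn_Ici (0:ℝ) 0 Set.self_mem_Ici).eq_deriv _
              hdiff.hasDerivAt.hasDerivWithinAt hd0
          · exact deriv_zero_of_not_differentiableAt hdiff
        rw [← hτ0, hderiv] at hseq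
        rw [hseq] at h1
        simp only [ENNReal.ofReal_zero] at h1
        rw [ENNReal.div_zero (ENNReal.ofReal_pos.2 ha).ne'] at h1
        exact absurd h1 (by simp)
      · have := lambda_pos hΛ0 hconv hd0 hτ0 hτD.2
        rw [hΛτ, ← h] at this
        exact lt_irrefl 0 this
    · have := hB 0 le_rfl (by simpa using ht0)
      rw [hΛ0, ← h] at this
      exact lt_irrefl 0 this
  · exact h

end Side3

section SideMain
variable {Λ : ℝ → ℝ} {t0 : ℝ≥0∞}

theorem side_main (ht0 : 0 < t0)
    (hΛ0 : Λ 0 = 0)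
    (hconv : StrictConvexOn ℝ {t : ℝ | 0 ≤ t ∧ ENNReal.ofReal t < t0} Λ)
    (hdiff : ∀ t : ℝ, 0 < t → ENNReal.ofReal t < t0 → DifferentiableAt ℝ Λ t)
    (hd0 : HasDerivWithinAt Λ 0 (Set.Ici 0) 0)
    {F a : ℝ} (hF : 0 < F) (ha : 0 < a)
    (I : ℝ → ℝ≥0∞)
    (hI : ∀ x : ℝ, I x =
      ⨆ t ∈ {t : ℝ | 0 ≤ t ∧ ENNReal.ofReal t < t0}, ENNReal.ofReal (t * x - Λ t))
    (T : ℝ → ℝ≥0∞)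
    (hT : ∀ u : ℝ, 0 < u → T u = ENNReal.ofReal u * I (a / u))
    (hT0 : Tendsto (fun u : ℝ => ENNReal.ofReal u * I (a / u))
      (nhdsWithin 0 (Set.Ioi 0)) (nhds (T 0)))
    {s : ℝ≥0∞}
    (hs : (∃ t : ℝ, (0 ≤ t ∧ ENNReal.ofReal t < t0) ∧ Λ t = F ∧
          s = ENNReal.ofReal (deriv Λ t)) ∨
        (∀ t : ℝ, 0 ≤ t → ENNReal.ofReal t < t0 → Λ t < F)) :
    (∃ τ u₀ : ℝ, 0 ≤ τ ∧ 0 ≤ u₀ ∧ ENNReal.ofReal u₀ ≤ ENNReal.ofReal a / s ∧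
      sSup {s' : ℝ≥0∞ | ∃ t : ℝ, (0 ≤ t ∧ ENNReal.ofReal t < t0) ∧
          s' = ENNReal.ofReal t ∧ Λ t ≤ F} = ENNReal.ofReal τ ∧
      T u₀ = ENNReal.ofReal (τ * a - u₀ * F) ∧ 0 ≤ τ * a - u₀ * F ∧
      (∀ u : ℝ, 0 ≤ u → ENNReal.ofReal (τ * a - u * F) ≤ T u))
    ∨ ((∀ u : ℝ, 0 ≤ u → T u = ⊤) ∧
       sSup {s' : ℝ≥0∞ | ∃ t : ℝ, (0 ≤ t ∧ ENNReal.ofReal t < t0) ∧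
          s' = ENNReal.ofReal t ∧ Λ t ≤ F} = ⊤) := by
  rcases hs with ⟨τ, hτD, hΛτ, hseq⟩ | hB
  · -- Case A
    left
    have hτpos : 0 < τ := by
      rcases eq_or_lt_of_le hτD.1 with h | h
      · exfalso; rw [← h, hΛ0] at hΛτ; linarith
      · exact h
    set d := deriv Λ τ with hd
    have hdge : F / τ ≤ d := by
      have := deriv_ge hΛ0 hconv hdiff hτpos hτD.2
      rwa [hΛτ] at this
    have hdpos : 0 < d := lt_of_lt_of_le (by positivity) hdge
    have hFdτ : F ≤ d * τ := by
      have := (div_le_iff₀ hτpos).1 hdge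
      linarith
    refine ⟨τ, a / d, hτpos.le, by positivity, ?_, ?_, ?_, ?_, ?_⟩
    · rw [hseq, ENNReal.ofReal_div_of_pos hdpos]
    · -- sSup = ofReal τ
      apply le_antisymm
      · apply sSup_le
        rintro s' ⟨t, htD, rfl, hΛtF⟩
        apply ENNReal.ofReal_le_ofReal
        by_contra hc
        push_neg at hc
        have := lambda_gt hΛ0 hconv hd0 hτpos hc htD.2
        rw [hΛτ] at this; linarith
      · exact le_sSup ⟨τ, hτD, rfl, hΛτ.le⟩
    · -- T u₀ value
      rw [hT _ (by positivity), T_formula ha I hI (by positivity)]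
      apply le_antisymm
      · refine iSup₂_le fun t htD => ENNReal.ofReal_le_ofReal ?_
        have htan := tangent_le hconv hdiff hτpos hτD.2 htD.1 htD.2
        rw [hΛτ, ← hd] at htan
        have h2 : a / d * (F + d * (t - τ)) = a / d * F + a * (t - τ) := by
          field_simp
        linarith [mul_le_mul_of_nonneg_left htan (by positivity : (0:ℝ) ≤ a / d), h2]
      · refine le_iSup₂_of_le τ hτD ?_
        rw [hΛτ]
    · -- nonneg
      have : (a / d) * F ≤ τ * a := by
        rw [div_mul_eq_mul_div, div_le_iff₀ hdpos]
        nlinarith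
      linarith
    · -- lower bounds
      intro u hu
      rcases eq_or_lt_of_le hu with h | h
      · rw [← h]
        have h1 : Tendsto (fun u : ℝ => ENNReal.ofReal (τ * a - u * F)) (𝓝[>] (0:ℝ))
            (𝓝 (ENNReal.ofReal (τ * a - 0 * F))) := by
          apply Tendsto.mono_left _ nhdsWithin_le_nhds
          exact (ENNReal.continuous_ofReal.tendsto _).comp
            (Continuous.tendsto (by fun_prop) 0)
        refine le_of_tendsto_of_tendsto h1 hT0 ?_
        filter_upwards [self_mem_nhdsWithin] with u hu'
        rw [Set.mem_Ioi] at hu'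
        rw [T_formula ha I hI hu']
        refine le_iSup₂_of_le τ hτD ?_
        rw [hΛτ]
      · rw [hT u h, T_formula ha I hI h]
        refine le_iSup₂_of_le τ hτD ?_
        rw [hΛτ]
  · -- Case B
    rcases eq_or_ne t0 ⊤ with htop | htop
    · -- degenerate: t0 = ⊤
      right
      have hD : ∀ t : ℝ, 0 ≤ t → t ∈ {t : ℝ | 0 ≤ t ∧ ENNReal.ofReal t < t0} := by
        intro t ht; exact ⟨ht, by rw [htop]; exact ENNReal.ofReal_lt_top⟩
      have hTtop : ∀ u : ℝ, 0 < u → T u = ⊤ := by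
        intro u hu
        rw [hT u hu, T_formula ha I hI hu, eq_top_iff]
        have h1 : Tendsto (fun t : ℝ => t * a - u * F) atTop atTop := by
          have := tendsto_atTop_add_const_right atTop (-(u * F))
            (tendsto_id.atTop_mul_const ha)
          simpa [sub_eq_add_neg] using this
        have htend : Tendsto (fun t : ℝ => ENNReal.ofReal (t * a - u * F)) atTop (𝓝 ⊤) :=
          ENNReal.tendsto_ofReal_atTop.comp h1
        refine le_of_tendsto htend ?_
        filter_upwards [eventually_ge_atTop (0:ℝ)] with t ht
        refine le_trans (ENNReal.ofReal_le_ofReal ?_) (le_iSup₂_of_le t (hD t ht) le_rfl)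
        have := hB t ht (hD t ht).2
        nlinarith
      refine ⟨?_, ?_⟩
      · intro u hu
        rcases eq_or_lt_of_le hu with h | h
        · rw [← h]
          have hcongr : (fun u : ℝ => ENNReal.ofReal u * I (a / u)) =ᶠ[𝓝[>] (0:ℝ)]
              (fun _ => (⊤ : ℝ≥0∞)) := by
            filter_upwards [self_mem_nhdsWithin] with u hu'
            rw [Set.mem_Ioi] at hu'
            rw [← hT u hu', hTtop u hu']
          exact tendsto_nhds_unique (hT0.congr' hcongr) tendsto_const_nhds
        · exact hTtop u h
      · rw [eq_top_iff]
        refine le_of_forall_lt_imp_le_of_dense fun c hc => ?_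
        have hmemt : ENNReal.ofReal c.toReal < t0 := by
          rw [htop]; exact ENNReal.ofReal_lt_top
        have hmem : c ∈ {s' : ℝ≥0∞ | ∃ t : ℝ, (0 ≤ t ∧ ENNReal.ofReal t < t0) ∧
            s' = ENNReal.ofReal t ∧ Λ t ≤ F} :=
          ⟨c.toReal, ⟨ENNReal.toReal_nonneg, hmemt⟩,
            (ENNReal.ofReal_toReal hc.ne).symm, (hB _ ENNReal.toReal_nonneg hmemt).le⟩
        exact le_sSup hmem
    · -- finite t0
      left
      set r := t0.toReal with hrdef
      have hr : 0 < r := ENNReal.toReal_pos ht0.ne' htop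
      have hofr : ENNReal.ofReal r = t0 := ENNReal.ofReal_toReal htop
      have hmemD : ∀ t : ℝ, 0 ≤ t → t < r → t ∈ {t : ℝ | 0 ≤ t ∧ ENNReal.ofReal t < t0} := by
        intro t ht htr
        exact ⟨ht, by rw [← hofr]; exact (ENNReal.ofReal_lt_ofReal_iff hr).2 htr⟩
      have htlt : ∀ t : ℝ, t ∈ {t : ℝ | 0 ≤ t ∧ ENNReal.ofReal t < t0} → t < r := by
        intro t htD
        have := htD.2
        rw [← hofr] at this
        exact (ENNReal.ofReal_lt_ofReal_iff hr).1 this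
      -- lower bound for T u, u > 0, at each t < r
      have hlow : ∀ u : ℝ, 0 < u → ENNReal.ofReal (r * a - u * F) ≤ T u := by
        intro u hu
        rw [hT u hu, T_formula ha I hI hu]
        have htend : Tendsto (fun t : ℝ => ENNReal.ofReal (t * a - u * F)) (𝓝[<] r)
            (𝓝 (ENNReal.ofReal (r * a - u * F))) := by
          apply Tendsto.mono_left _ nhdsWithin_le_nhds
          exact (ENNReal.continuous_ofReal.tendsto _).comp (Continuous.tendsto (by fun_prop) r)
        refine le_of_tendsto htend ?_
        filter_upwards [Ioo_mem_nhdsLT_of_mem (⟨hr, le_rfl⟩ : r ∈ Set.Ioc 0 r)] with t htIoo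
        have hΛ := hB t htIoo.1.le (hmemD t htIoo.1.le htIoo.2).2
        exact le_iSup₂_of_le t (hmemD t htIoo.1.le htIoo.2)
          (ENNReal.ofReal_le_ofReal (by nlinarith))
      have hT0val : T 0 = ENNReal.ofReal (r * a) := by
        apply le_antisymm
        · refine le_of_tendsto hT0 ?_
          filter_upwards [self_mem_nhdsWithin] with u hu'
          rw [Set.mem_Ioi] at hu'
          rw [T_formula ha I hI hu']
          refine iSup₂_le fun t htD => ENNReal.ofReal_le_ofReal ?_
          have h1 := lambda_nonneg hΛ0 hconv hd0 htD.1 htD.2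
          have h2 := htlt t htD
          nlinarith
        · have htend : Tendsto (fun t : ℝ => ENNReal.ofReal (t * a)) (𝓝[<] r)
              (𝓝 (ENNReal.ofReal (r * a))) := by
            apply Tendsto.mono_left _ nhdsWithin_le_nhds
            exact (ENNReal.continuous_ofReal.tendsto _).comp (Continuous.tendsto (by fun_prop) r)
          refine le_of_tendsto htend ?_
          filter_upwards [Ioo_mem_nhdsLT_of_mem (⟨hr, le_rfl⟩ : r ∈ Set.Ioc 0 r)] with t htIoo
          -- ofReal (t*a) ≤ T 0 via limit u → 0
          have h1 : Tendsto (fun u : ℝ => ENNReal.ofReal (t * a - u * Λ t)) (𝓝[>] (0:ℝ))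
              (𝓝 (ENNReal.ofReal (t * a - 0 * Λ t))) := by
            apply Tendsto.mono_left _ nhdsWithin_le_nhds
            exact (ENNReal.continuous_ofReal.tendsto _).comp (Continuous.tendsto (by fun_prop) 0)
          have h2 : ENNReal.ofReal (t * a - 0 * Λ t) ≤ T 0 := by
            refine le_of_tendsto_of_tendsto h1 hT0 ?_
            filter_upwards [self_mem_nhdsWithin] with u hu'
            rw [Set.mem_Ioi] at hu'
            rw [T_formula ha I hI hu']
            exact le_iSup₂_of_le t (hmemD t htIoo.1.le htIoo.2) le_rfl
          have h3 : t * a - 0 * Λ t = t * a := by ring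
          rw [h3] at h2
          exact h2
      refine ⟨r, 0, hr.le, le_rfl, by simp, ?_, ?_, by nlinarith, ?_⟩
      · -- sSup = ofReal r
        apply le_antisymm
        · apply sSup_le
          rintro s' ⟨t, htD, rfl, _⟩
          exact ENNReal.ofReal_le_ofReal (htlt t htD).le
        · refine le_of_forall_lt_imp_le_of_dense fun c hc => ?_
          have hcne : c ≠ ⊤ := hc.trans ENNReal.ofReal_lt_top |>.ne
          have hctr : c.toReal < r := by
            have := (ENNReal.toReal_lt_toReal hcne ENNReal.ofReal_ne_top).2 hc
            rwa [ENNReal.toReal_ofReal hr.le] at this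
          have hmem : c ∈ {s' : ℝ≥0∞ | ∃ t : ℝ, (0 ≤ t ∧ ENNReal.ofReal t < t0) ∧
              s' = ENNReal.ofReal t ∧ Λ t ≤ F} :=
            ⟨c.toReal, hmemD _ ENNReal.toReal_nonneg hctr,
              (ENNReal.ofReal_toReal hcne).symm, (hB _ ENNReal.toReal_nonneg
                (hmemD _ ENNReal.toReal_nonneg hctr).2).le⟩
          exact le_sSup hmem
      · simpa using hT0val
      · intro u hu
        rcases eq_or_lt_of_le hu with h | h
        · rw [← h]
          simpa using hT0val.ge
        · exact hlow u h

end SideMain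

lemma coe_le_of_ofReal_le {x : ℝ} {y : ℝ≥0∞} (h : ENNReal.ofReal x ≤ y) :
    (x : EReal) ≤ (y : EReal) := by
  refine le_trans ?_ (EReal.coe_ennreal_le_coe_ennreal_iff.2 h)
  rw [EReal.coe_ennreal_ofReal]
  exact_mod_cast le_max_left x 0

lemma coe_ofReal_eq {x : ℝ} (hx : 0 ≤ x) :
    ((ENNReal.ofReal x : ℝ≥0∞) : EReal) = (x : EReal) := by
  rw [EReal.coe_ennreal_ofReal, max_eq_left hx]


end Aux

/-- two-sided optimization.  With `I∓`, `Λ∓` as in Statement 4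
(`Λm` / `Λp` playing the roles of `Λ₋` / `Λ₊`, with domains `[0, t0m)`, `[0, t0p)`),
`F ≥ 0`, `a > 0`, set `g(u,v) = (v-u)F - Tm(u) - Tp(1-v)` on `0 ≤ u ≤ v ≤ 1`, where
`Tm(u) = u I₋(a/u)` for `u > 0` (extended by its limit at `0`), and similarly `Tp`.
Let `sm = Λ₋' ∘ Λ₋⁻¹(F)` (the slope at the inverse point, or the limiting slope
`ρ₋ = lim_{t ↑ t0m} Λ₋'(t)` when `F ≥ Λ₋(t0m⁻)`), similarly `sp`.  If
`w₋* + w₊* ≤ 1` with `w∓* = a / s∓`, then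
`sup g = F - a Λ₋⁻¹(F) - a Λ₊⁻¹(F)` (inverses as generalized left-continuous
inverses, `sSup {t ∈ D : Λ t ≤ F}`). -/
theorem sup_g_two_sided
    (Λm Λp : ℝ → ℝ) (t0m t0p : ℝ≥0∞) (ht0m : 0 < t0m) (ht0p : 0 < t0p)
    (hΛm0 : Λm 0 = 0) (hΛp0 : Λp 0 = 0)
    (hconvm : StrictConvexOn ℝ {t : ℝ | 0 ≤ t ∧ ENNReal.ofReal t < t0m} Λm)
    (hconvp : StrictConvexOn ℝ {t : ℝ | 0 ≤ t ∧ ENNReal.ofReal t < t0p} Λp)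
    (hdiffm : ∀ t : ℝ, 0 < t → ENNReal.ofReal t < t0m → DifferentiableAt ℝ Λm t)
    (hdiffp : ∀ t : ℝ, 0 < t → ENNReal.ofReal t < t0p → DifferentiableAt ℝ Λp t)
    (hd0m : HasDerivWithinAt Λm 0 (Set.Ici 0) 0)
    (hd0p : HasDerivWithinAt Λp 0 (Set.Ici 0) 0)
    (F a : ℝ) (hF : 0 ≤ F) (ha : 0 < a)
    (Im Ip : ℝ → ℝ≥0∞)
    (hIm : ∀ x : ℝ, Im x =
      ⨆ t ∈ {t : ℝ | 0 ≤ t ∧ ENNReal.ofReal t < t0m}, ENNReal.ofReal (t * x - Λm t))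
    (hIp : ∀ x : ℝ, Ip x =
      ⨆ t ∈ {t : ℝ | 0 ≤ t ∧ ENNReal.ofReal t < t0p}, ENNReal.ofReal (t * x - Λp t))
    (Tm Tp : ℝ → ℝ≥0∞)
    (hTm : ∀ u : ℝ, 0 < u → Tm u = ENNReal.ofReal u * Im (a / u))
    (hTm0 : Tendsto (fun u : ℝ => ENNReal.ofReal u * Im (a / u))
      (nhdsWithin 0 (Set.Ioi 0)) (nhds (Tm 0)))
    (hTp : ∀ u : ℝ, 0 < u → Tp u = ENNReal.ofReal u * Ip (a / u))
    (hTp0 : Tendsto (fun u : ℝ => ENNReal.ofReal u * Ip (a / u))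
      (nhdsWithin 0 (Set.Ioi 0)) (nhds (Tp 0)))
    (sm sp : ℝ≥0∞)
    (hsm : (∃ t : ℝ, (0 ≤ t ∧ ENNReal.ofReal t < t0m) ∧ Λm t = F ∧
          sm = ENNReal.ofReal (deriv Λm t)) ∨
        ((∀ t : ℝ, 0 ≤ t → ENNReal.ofReal t < t0m → Λm t < F) ∧
          Tendsto (fun t : ℝ => ENNReal.ofReal (deriv Λm t))
            ((Filter.comap (fun t : ℝ => ENNReal.ofReal t)
                (nhdsWithin t0m (Set.Iio t0m))) ⊓ Filter.principal (Set.Ici 0))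
            (nhds sm)))
    (hsp : (∃ t : ℝ, (0 ≤ t ∧ ENNReal.ofReal t < t0p) ∧ Λp t = F ∧
          sp = ENNReal.ofReal (deriv Λp t)) ∨
        ((∀ t : ℝ, 0 ≤ t → ENNReal.ofReal t < t0p → Λp t < F) ∧
          Tendsto (fun t : ℝ => ENNReal.ofReal (deriv Λp t))
            ((Filter.comap (fun t : ℝ => ENNReal.ofReal t)
                (nhdsWithin t0p (Set.Iio t0p))) ⊓ Filter.principal (Set.Ici 0))
            (nhds sp)))
    (hw : ENNReal.ofReal a / sm + ENNReal.ofReal a / sp ≤ 1) :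
    (⨆ (p : ℝ × ℝ) (_ : 0 ≤ p.1 ∧ p.1 ≤ p.2 ∧ p.2 ≤ 1),
        ((((p.2 - p.1) * F : ℝ) : EReal) - (Tm p.1 : EReal) - (Tp (1 - p.2) : EReal)))
      = ((F : ℝ) : EReal)
        - ((ENNReal.ofReal a *
            sSup {s : ℝ≥0∞ | ∃ t : ℝ, (0 ≤ t ∧ ENNReal.ofReal t < t0m) ∧
              s = ENNReal.ofReal t ∧ Λm t ≤ F} : ℝ≥0∞) : EReal)
        - ((ENNReal.ofReal a *
            sSup {s : ℝ≥0∞ | ∃ t : ℝ, (0 ≤ t ∧ ENNReal.ofReal t < t0p) ∧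
              s = ENNReal.ofReal t ∧ Λp t ≤ F} : ℝ≥0∞) : EReal) := by
  have hsm' := hsm.imp id And.left
  have hsp' := hsp.imp id And.left
  have hFpos : 0 < F := F_pos ht0m hΛm0 hconvm hd0m hF ha hsm' (le_self_add.trans hw)
  rcases side_main ht0m hΛm0 hconvm hdiffm hd0m hFpos ha Im hIm Tm hTm hTm0 hsm' with
    ⟨τ1, u1, hτ1, hu1, hle1, hsSup1, hTval1, hnn1, hlb1⟩ | ⟨hTtop1, hStop1⟩
  swap
  · -- m degenerate
    have hLHS : (⨆ (p : ℝ × ℝ) (_ : 0 ≤ p.1 ∧ p.1 ≤ p.2 ∧ p.2 ≤ 1),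
        ((((p.2 - p.1) * F : ℝ) : EReal) - (Tm p.1 : EReal) - (Tp (1 - p.2) : EReal)))
        = (⊥ : EReal) := by
      refine le_antisymm (iSup_le fun p => iSup_le fun hp => ?_) bot_le
      rw [hTtop1 p.1 hp.1, EReal.coe_ennreal_top, EReal.sub_top, EReal.bot_sub]
    rw [hLHS, hStop1, ENNReal.mul_top (ENNReal.ofReal_pos.2 ha).ne', EReal.coe_ennreal_top,
      EReal.sub_top, EReal.bot_sub]
  rcases side_main ht0p hΛp0 hconvp hdiffp hd0p hFpos ha Ip hIp Tp hTp hTp0 hsp' with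
    ⟨τ2, u2, hτ2, hu2, hle2, hsSup2, hTval2, hnn2, hlb2⟩ | ⟨hTtop2, hStop2⟩
  swap
  · -- p degenerate
    have hLHS : (⨆ (p : ℝ × ℝ) (_ : 0 ≤ p.1 ∧ p.1 ≤ p.2 ∧ p.2 ≤ 1),
        ((((p.2 - p.1) * F : ℝ) : EReal) - (Tm p.1 : EReal) - (Tp (1 - p.2) : EReal)))
        = (⊥ : EReal) := by
      refine le_antisymm (iSup_le fun p => iSup_le fun hp => ?_) bot_le
      rw [hTtop2 (1 - p.2) (by linarith [hp.2.2]), EReal.coe_ennreal_top, EReal.sub_top]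
    rw [hLHS, hStop2, ENNReal.mul_top (ENNReal.ofReal_pos.2 ha).ne', EReal.coe_ennreal_top,
      EReal.sub_top]
  -- main case
  have hsum : u1 + u2 ≤ 1 := by
    have h1 : ENNReal.ofReal u1 + ENNReal.ofReal u2 ≤ 1 := le_trans (add_le_add hle1 hle2) hw
    have h2 : ENNReal.ofReal (u1 + u2) ≤ ENNReal.ofReal 1 := by
      rw [ENNReal.ofReal_add hu1 hu2, ENNReal.ofReal_one]; exact h1
    exact (ENNReal.ofReal_le_ofReal_iff zero_le_one).1 h2
  rw [hsSup1, hsSup2, ← ENNReal.ofReal_mul ha.le, ← ENNReal.ofReal_mul ha.le,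
    coe_ofReal_eq (by positivity), coe_ofReal_eq (by positivity),
    ← EReal.coe_sub, ← EReal.coe_sub]
  apply le_antisymm
  · refine iSup_le fun p => iSup_le fun hp => ?_
    obtain ⟨hp1, hp2, hp3⟩ := hp
    have h1 : ((τ1 * a - p.1 * F : ℝ) : EReal) ≤ (Tm p.1 : EReal) :=
      coe_le_of_ofReal_le (hlb1 p.1 hp1)
    have h2 : ((τ2 * a - (1 - p.2) * F : ℝ) : EReal) ≤ (Tp (1 - p.2) : EReal) :=
      coe_le_of_ofReal_le (hlb2 (1 - p.2) (by linarith))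
    calc (((p.2 - p.1) * F : ℝ) : EReal) - (Tm p.1 : EReal) - (Tp (1 - p.2) : EReal)
        ≤ (((p.2 - p.1) * F : ℝ) : EReal) - ((τ1 * a - p.1 * F : ℝ) : EReal)
            - ((τ2 * a - (1 - p.2) * F : ℝ) : EReal) :=
          EReal.sub_le_sub (EReal.sub_le_sub le_rfl h1) h2
      _ = (((p.2 - p.1) * F - (τ1 * a - p.1 * F) - (τ2 * a - (1 - p.2) * F) : ℝ) : EReal) := by
          rw [← EReal.coe_sub, ← EReal.coe_sub]
      _ = ((F - a * τ1 - a * τ2 : ℝ) : EReal) := by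
          norm_cast
          ring
  · have hprop : 0 ≤ (u1, 1 - u2).1 ∧ (u1, 1 - u2).1 ≤ (u1, 1 - u2).2 ∧ (u1, 1 - u2).2 ≤ 1 := by
      refine ⟨hu1, ?_, ?_⟩ <;> simp <;> linarith
    refine le_trans (le_of_eq ?_) (le_iSup₂ (u1, 1 - u2) hprop)
    have e2 : (1 : ℝ) - (1 - u2) = u2 := by ring
    simp only [e2]
    rw [hTval1, hTval2, coe_ofReal_eq hnn1, coe_ofReal_eq hnn2,
      ← EReal.coe_sub, ← EReal.coe_sub]
    norm_cast
    ring
end
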